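/- Let j > 2 be an odd integer, q a power of 2, and a the multiplicative order of 2 modulo j. Then for n ≥ 1, the Fibonacci polynomial F_n(T) is a perfect j-th power in F_q[T] if and only if n = 2^{ak} for some natural number k. -/

import Mathlib

/-!
In characteristic 2 the doubling formulas read `F (2n) = X * F n ^ 2` and
`F (2n+1) = (F (n+1) + F n) ^ 2`. Writing `n = 2 ^ s * (2t+1)`, this gives
`F n = X ^ (2 ^ s - 1) * G ^ 2 ^ (s+1)` with `G = F (t+1) + F t`. The polynomial `G` is separable,
since `X * G' = F t + t * G` and consecutive Fibonacci polynomials are coprime, and it is prime to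
`X`. So if `t > 0`, an irreducible factor of `G` divides `F n` exactly `2 ^ (s+1)` times, and no odd
`j > 1` divides that. If `t = 0`, then `F n = X ^ (2 ^ s - 1)` is a `j`-th power iff
`j ∣ 2 ^ s - 1`, i.e. iff the order of `2` modulo `j` divides `s`.
-/

open Polynomial

noncomputable def fibPoly (R : Type*) [CommRing R] : ℕ → Polynomial R
  | 0 => 0
  | 1 => 1
  | n + 2 => Polynomial.X * fibPoly R (n + 1) + fibPoly R n

theorem Nat.eq_one_of_odd_of_dvd_two_pow {m t : ℕ} (hm : Odd m) (h : m ∣ 2 ^ t) : m = 1 :=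
  (hm.coprime_two_right.pow_right t).eq_one_of_dvd h

theorem ZMod.dvd_pow_sub_one_iff_orderOf_dvd {b : ℕ} (hb : 0 < b) (j s : ℕ) :
    j ∣ b ^ s - 1 ↔ orderOf (b : ZMod j) ∣ s := by
  rw [orderOf_dvd_iff_pow_eq_one, ← ZMod.natCast_eq_zero_iff,
    Nat.cast_sub (Nat.one_le_pow _ _ hb), sub_eq_zero]
  push_cast
  rfl

theorem dvd_of_emultiplicity_eq_of_eq_pow {α : Type*} [CommMonoidWithZero α] [IsCancelMulZero α]
    {p f g : α} (hp : Prime p) {j e : ℕ} (hf : emultiplicity p f = e) (h : f = g ^ j) : j ∣ e := by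
  rw [h, emultiplicity_pow hp] at hf
  obtain rfl | hj := j.eq_zero_or_pos
  · simpa [eq_comm] using hf
  · have hfin : emultiplicity p g ≠ ⊤ := by
      rintro hg
      simp [hg, ENat.mul_top (by exact_mod_cast hj.ne' : (j : ℕ∞) ≠ 0)] at hf
    lift emultiplicity p g to ℕ using hfin with k
    exact ⟨k, by exact_mod_cast hf.symm⟩

theorem Polynomial.exists_X_pow_eq_pow_iff {R : Type*} [CommRing R] [IsDomain R] (e j : ℕ) :
    (∃ g : R[X], X ^ e = g ^ j) ↔ j ∣ e := by
  constructor
  · rintro ⟨g, hg⟩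
    exact ⟨g.natDegree, by simpa using congrArg natDegree hg⟩
  · rintro ⟨k, rfl⟩
    exact ⟨X ^ k, pow_mul' X j k⟩

section FibPoly

variable {R : Type*} [CommRing R]

theorem fibPoly_add_two (n : ℕ) : fibPoly R (n + 2) = X * fibPoly R (n + 1) + fibPoly R n := rfl

theorem fibPoly_add_add_one (m n : ℕ) :
    fibPoly R (m + n + 1) = fibPoly R (m + 1) * fibPoly R (n + 1) + fibPoly R m * fibPoly R n := by
  induction n generalizing m with
  | zero => simp [fibPoly]
  | succ n ih =>
    rw [show m + (n + 1) + 1 = (m + 1) + n + 1 by ring, ih, fibPoly_add_two, fibPoly_add_two]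
    ring

theorem degree_fibPoly_succ [Nontrivial R] : ∀ n : ℕ, (fibPoly R (n + 1)).degree = n
  | 0 => by simp [fibPoly]
  | 1 => by simp [fibPoly]
  | n + 2 => by
    have hX : (X * fibPoly R (n + 2)).degree = ↑(n + 2) := by
      rw [mul_comm, degree_mul_X, degree_fibPoly_succ (n + 1)]
      rfl
    have hlt : (fibPoly R (n + 1)).degree < (X * fibPoly R (n + 2)).degree := by
      rw [hX, degree_fibPoly_succ n]
      exact_mod_cast (by omega : n < n + 2)
    rw [fibPoly_add_two, degree_add_eq_left_of_degree_lt hlt, hX]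

theorem natDegree_fibPoly_succ [Nontrivial R] (n : ℕ) : (fibPoly R (n + 1)).natDegree = n :=
  natDegree_eq_of_degree_eq_some (degree_fibPoly_succ n)

theorem isCoprime_fibPoly_fibPoly_succ (n : ℕ) : IsCoprime (fibPoly R n) (fibPoly R (n + 1)) := by
  induction n with
  | zero => simp [fibPoly, isCoprime_one_right]
  | succ n ih =>
    rw [fibPoly_add_two]
    exact ih.symm.mul_add_right_right X

theorem isCoprime_X_fibPoly_two_mul_add_one (n : ℕ) : IsCoprime X (fibPoly R (2 * n + 1)) := by
  induction n with
  | zero => simp [fibPoly, isCoprime_one_right]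
  | succ n ih => simpa [fibPoly_add_two, mul_add, add_assoc] using ih

variable [CharP R 2]

theorem fibPoly_two_mul (n : ℕ) : fibPoly R (2 * n) = X * fibPoly R n ^ 2 := by
  have h2 : (2 : R[X]) = 0 := CharTwo.two_eq_zero
  cases n with
  | zero => simp [fibPoly]
  | succ n =>
    rw [show 2 * (n + 1) = (n + 1) + n + 1 by ring, fibPoly_add_add_one, fibPoly_add_two]
    linear_combination fibPoly R (n + 1) * fibPoly R n * h2

theorem fibPoly_two_mul_add_one (n : ℕ) :
    fibPoly R (2 * n + 1) = (fibPoly R (n + 1) + fibPoly R n) ^ 2 := by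
  rw [two_mul, fibPoly_add_add_one, add_pow_char]
  ring

theorem fibPoly_two_pow_mul (s m : ℕ) :
    fibPoly R (2 ^ s * m) = X ^ (2 ^ s - 1) * fibPoly R m ^ 2 ^ s := by
  induction s with
  | zero => simp
  | succ s ih =>
    have hs : 2 ^ (s + 1) - 1 = 2 * (2 ^ s - 1) + 1 := by
      have := Nat.one_le_two_pow (n := s)
      rw [pow_succ]
      omega
    rw [hs, pow_succ', mul_assoc, fibPoly_two_mul, ih]
    ring

theorem fibPoly_two_pow (s : ℕ) : fibPoly R (2 ^ s) = X ^ (2 ^ s - 1) := by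
  simpa [fibPoly] using fibPoly_two_pow_mul (R := R) s 1

-- In characteristic 2, `fibPoly R n` only has monomials of degree `≡ n + 1 (mod 2)`.
theorem X_mul_derivative_fibPoly : ∀ n : ℕ,
    X * derivative (fibPoly R n) = ((n : R[X]) + 1) * fibPoly R n
  | 0 => by simp [fibPoly]
  | 1 => by simpa [fibPoly, one_add_one_eq_two] using (CharTwo.two_eq_zero (R := R[X])).symm
  | n + 2 => by
    have h2 : (2 : R[X]) = 0 := CharTwo.two_eq_zero
    have h1 := X_mul_derivative_fibPoly (n + 1)
    rw [fibPoly_add_two, derivative_add, derivative_mul, derivative_X]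
    push_cast at h1 ⊢
    linear_combination X * h1 + X_mul_derivative_fibPoly n - fibPoly R n * h2

theorem separable_fibPoly_succ_add_fibPoly (n : ℕ) :
    (fibPoly R (n + 1) + fibPoly R n).Separable := by
  have h2 : (2 : R[X]) = 0 := CharTwo.two_eq_zero
  have hX : X * derivative (fibPoly R (n + 1) + fibPoly R n) =
      fibPoly R n + (n : R[X]) * (fibPoly R (n + 1) + fibPoly R n) := by
    rw [derivative_add, mul_add, X_mul_derivative_fibPoly, X_mul_derivative_fibPoly]
    push_cast
    linear_combination fibPoly R (n + 1) * h2
  have hcop : IsCoprime (fibPoly R (n + 1) + fibPoly R n) (fibPoly R n) := by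
    simpa using (isCoprime_fibPoly_fibPoly_succ (R := R) n).symm.add_mul_right_left 1
  refine IsCoprime.of_mul_right_right (y := X) ?_
  rw [hX]
  exact hcop.add_mul_right_right _

theorem emultiplicity_fibPoly_two_pow_mul_two_mul_add_one [IsDomain R] (s : ℕ) {t : ℕ}
    {p : R[X]} (hp : Prime p) (hpG : p ∣ fibPoly R (t + 1) + fibPoly R t) :
    emultiplicity p (fibPoly R (2 ^ s * (2 * t + 1))) = ((2 ^ (s + 1) : ℕ) : ℕ∞) := by
  have hG : emultiplicity p (fibPoly R (t + 1) + fibPoly R t) = 1 := by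
    refine le_antisymm ?_ (Order.one_le_iff_pos.mpr (emultiplicity_pos_of_dvd hpG))
    exact ((squarefree_iff_emultiplicity_le_one _).mp
      (separable_fibPoly_succ_add_fibPoly t).squarefree p).resolve_right hp.not_isUnit
  have hX : emultiplicity p X = 0 := by
    refine emultiplicity_eq_zero.mpr fun hpX => hp.not_isUnit ?_
    have hcop := isCoprime_X_fibPoly_two_mul_add_one (R := R) t
    rw [fibPoly_two_mul_add_one, IsCoprime.pow_right_iff two_pos] at hcop
    exact hcop.isUnit_of_dvd' hpX hpG
  rw [fibPoly_two_pow_mul, fibPoly_two_mul_add_one, ← pow_mul, emultiplicity_mul hp,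
    emultiplicity_pow hp, emultiplicity_pow hp, hG, hX, pow_succ']
  simp

end FibPoly

theorem not_exists_fibPoly_two_pow_mul_eq_pow {F : Type*} [Field F] [CharP F 2] {j m : ℕ}
    (hj : Odd j) (hj1 : j ≠ 1) (hm : Odd m) (hm1 : m ≠ 1) (s : ℕ) :
    ¬ ∃ g : F[X], fibPoly F (2 ^ s * m) = g ^ j := by
  obtain ⟨t, rfl⟩ := hm
  have ht : t ≠ 0 := by
    rintro rfl
    simp at hm1
  have hdeg : (fibPoly F (t + 1) + fibPoly F t).natDegree = t := by
    have := congrArg natDegree (fibPoly_two_mul_add_one (R := F) t)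
    rw [natDegree_fibPoly_succ, natDegree_pow] at this
    omega
  obtain ⟨p, hp, hpG⟩ := WfDvdMonoid.exists_irreducible_factor
    (fun hu => ht (hdeg ▸ natDegree_eq_zero_of_isUnit hu))
    (fun h0 => ht (by simpa [h0] using hdeg.symm))
  rintro ⟨g, hg⟩
  exact hj1 <| Nat.eq_one_of_odd_of_dvd_two_pow hj <| dvd_of_emultiplicity_eq_of_eq_pow hp.prime
    (emultiplicity_fibPoly_two_pow_mul_two_mul_add_one s hp.prime hpG) hg

theorem fib_poly_jth_power_iff_char_two_general (j : ℕ) (hj : 2 < j) (hjodd : Odd j)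
    (F : Type*) [Field F] [CharP F 2]
    (a : ℕ) (ha : a = orderOf (2 : ZMod j)) (n : ℕ) (hn : 1 ≤ n) :
    (∃ g : Polynomial F, fibPoly F n = g ^ j) ↔ ∃ k : ℕ, n = 2 ^ (a * k) := by
  obtain ⟨s, m, hm, rfl⟩ := Nat.exists_eq_two_pow_mul_odd (n := n) (by omega)
  by_cases hm1 : m = 1
  · subst hm1
    rw [mul_one, fibPoly_two_pow, exists_X_pow_eq_pow_iff,
      ZMod.dvd_pow_sub_one_iff_orderOf_dvd two_pos, Nat.cast_ofNat, ← ha]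
    simp only [(Nat.pow_right_injective le_rfl).eq_iff]
    rfl
  · refine iff_of_false (not_exists_fibPoly_two_pow_mul_eq_pow hjodd (by omega) hm hm1 s) ?_
    rintro ⟨k, hk⟩
    exact hm1 (Nat.eq_one_of_odd_of_dvd_two_pow hm (hk ▸ dvd_mul_left m _))

theorem fib_poly_jth_power_iff_char_two (j : ℕ) (hj : 2 < j) (hjodd : Odd j)
    (F : Type*) [Field F] [Fintype F] [CharP F 2]
    (a : ℕ) (ha : a = orderOf (2 : ZMod j)) (n : ℕ) (hn : 1 ≤ n) :
    (∃ g : Polynomial F, fibPoly F n = g ^ j) ↔ ∃ k : ℕ, n = 2 ^ (a * k) :=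
  fib_poly_jth_power_iff_char_two_general j hj hjodd F a ha n hn
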